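/- arXiv:2108.00880 — 3 statements merged into one kernel-verified Lean document; each statement's English description precedes it below -/
import Mathlib

section
/- Let S be a nondegenerate n-dimensional simplex in ℝ^n with basic Lagrange polynomials λ_1,…,λ_{n+1}, and let Ω be a convex body in ℝ^n with Ω ⊄ S. Then ξ(Ω;S) = (n+1)·max_{1≤k≤n+1} max_{x∈Ω} (−λ_k(x)) + 1. -/
open Set MeasureTheory Finset Metric

noncomputable section

/-- The unit cube `Q_n = [0,1]^n` in `ℝ^n`. -/
def unitCube (n : ℕ) : Set (EuclideanSpace ℝ (Fin n)) :=
  {x | ∀ i, x i ∈ Set.Icc (0 : ℝ) 1}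

/-- The set of vertices of the unit cube `Q_n`. -/
def cubeVertices (n : ℕ) : Set (EuclideanSpace ℝ (Fin n)) :=
  {x | ∀ i, x i = 0 ∨ x i = 1}

/-- The closed unit Euclidean ball `B_n` in `ℝ^n`. -/
def unitBall (n : ℕ) : Set (EuclideanSpace ℝ (Fin n)) :=
  Metric.closedBall 0 1

/-- Image of a set under the homothety with center `c` and ratio `σ`. -/
def homothet {n : ℕ} (c : EuclideanSpace ℝ (Fin n)) (σ : ℝ)
    (S : Set (EuclideanSpace ℝ (Fin n))) : Set (EuclideanSpace ℝ (Fin n)) :=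
  (fun x => c + σ • (x - c)) '' S

/-- The simplex with vertex set `v` (its convex hull). -/
def simplexSet {n : ℕ} (v : Fin (n + 1) → EuclideanSpace ℝ (Fin n)) :
    Set (EuclideanSpace ℝ (Fin n)) :=
  convexHull ℝ (Set.range v)

/-- The centroid (center of gravity) of the simplex with vertices `v`. -/
def simplexCentroid {n : ℕ} (v : Fin (n + 1) → EuclideanSpace ℝ (Fin n)) :
    EuclideanSpace ℝ (Fin n) :=
  Finset.univ.centroid ℝ v

/-- `σS`: homothetic copy of the simplex `S` with center at its centroid and ratio `σ`. -/
def simplexHomothet {n : ℕ} (v : Fin (n + 1) → EuclideanSpace ℝ (Fin n)) (σ : ℝ) :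
    Set (EuclideanSpace ℝ (Fin n)) :=
  homothet (simplexCentroid v) σ (simplexSet v)

/-- The absorption index `ξ(Ω;S)`: minimal `σ ≥ 1` with `Ω ⊆ σS`. -/
def xiInd {n : ℕ} (Ω : Set (EuclideanSpace ℝ (Fin n)))
    (v : Fin (n + 1) → EuclideanSpace ℝ (Fin n)) : ℝ :=
  sInf {σ : ℝ | 1 ≤ σ ∧ Ω ⊆ simplexHomothet v σ}

/-- `α(Ω;S)`: minimal `σ > 0` such that `Ω` is contained in a translate of `σS`. -/
def alphaInd {n : ℕ} (Ω : Set (EuclideanSpace ℝ (Fin n)))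
    (v : Fin (n + 1) → EuclideanSpace ℝ (Fin n)) : ℝ :=
  sInf {σ : ℝ | 0 < σ ∧ ∃ t : EuclideanSpace ℝ (Fin n),
    Ω ⊆ (fun x => t + x) '' simplexHomothet v σ}

/-- `lam` is the family of basic Lagrange polynomials of the simplex with vertices `v`:
affine maps with `lam j (v k) = δ_{jk}`. -/
def IsLagrangeBasis {n : ℕ} (v : Fin (n + 1) → EuclideanSpace ℝ (Fin n))
    (lam : Fin (n + 1) → (EuclideanSpace ℝ (Fin n) →ᵃ[ℝ] ℝ)) : Prop :=
  ∀ j k, lam j (v k) = if j = k then (1 : ℝ) else 0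

/-- The `i`-th axial diameter of a set: maximal length of a segment contained in it
and parallel to the `i`-th coordinate axis. -/
def axialDiameter {n : ℕ} (i : Fin n) (S : Set (EuclideanSpace ℝ (Fin n))) : ℝ :=
  sSup {t : ℝ | 0 ≤ t ∧ ∃ x, x ∈ S ∧ x + t • (EuclideanSpace.single i (1 : ℝ)) ∈ S}

/-- Norm of the interpolation projector with Lagrange basis `lam`, as an operator
`C(Ω) → C(Ω)`: it equals `max_{x ∈ Ω} Σ_j |λ_j(x)|`. -/
def projNorm {n : ℕ} (Ω : Set (EuclideanSpace ℝ (Fin n)))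
    (lam : Fin (n + 1) → (EuclideanSpace ℝ (Fin n) →ᵃ[ℝ] ℝ)) : ℝ :=
  sSup ((fun x => ∑ j, |lam j x|) '' Ω)

/-- `θ_n(Ω)`: the minimal norm of an interpolation projector with nodes in `Ω`. -/
def thetaMin (n : ℕ) (Ω : Set (EuclideanSpace ℝ (Fin n))) : ℝ :=
  sInf {t : ℝ | ∃ v : Fin (n + 1) → EuclideanSpace ℝ (Fin n),
    ∃ lam : Fin (n + 1) → (EuclideanSpace ℝ (Fin n) →ᵃ[ℝ] ℝ),
      AffineIndependent ℝ v ∧ (∀ j, v j ∈ Ω) ∧ IsLagrangeBasis v lam ∧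
      t = projNorm Ω lam}

/-- `ξ_n`: minimal absorption index of the unit cube by a contained nondegenerate simplex. -/
def xiMin (n : ℕ) : ℝ :=
  sInf {t : ℝ | ∃ v : Fin (n + 1) → EuclideanSpace ℝ (Fin n),
    AffineIndependent ℝ v ∧ simplexSet v ⊆ unitCube n ∧ t = xiInd (unitCube n) v}

/-- The standardized Legendre polynomial `χ_n` (Rodrigues formula). -/
def legendreChi (n : ℕ) (t : ℝ) : ℝ :=
  (1 / (2 ^ n * (n.factorial : ℝ))) * iteratedDeriv n (fun s : ℝ => (s ^ 2 - 1) ^ n) t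

/-- The inverse of `χ_n` on the half-axis `[1, +∞)`. -/
def legendreInv (n : ℕ) (y : ℝ) : ℝ :=
  Function.invFunOn (legendreChi n) (Set.Ici 1) y

/-- `ν_n`: the maximal volume of an `n`-dimensional simplex contained in `Q_n`. -/
def maxSimplexVol (n : ℕ) : ℝ :=
  sSup {t : ℝ | ∃ v : Fin (n + 1) → EuclideanSpace ℝ (Fin n),
    AffineIndependent ℝ v ∧ simplexSet v ⊆ unitCube n ∧
    t = (volume (simplexSet v)).toReal}

/-- `h_n`: the maximal determinant of an `n×n` matrix with entries in `{0,1}`. -/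
def maxDet01 (n : ℕ) : ℝ :=
  sSup {d : ℝ | ∃ M : Matrix (Fin n) (Fin n) ℝ,
    (∀ i j, M i j = 0 ∨ M i j = 1) ∧ d = M.det}

/-- `σ_n`: the volume of a regular `n`-dimensional simplex inscribed into `B_n`. -/
def regSimplexVol (n : ℕ) : ℝ :=
  sSup {t : ℝ | ∃ v : Fin (n + 1) → EuclideanSpace ℝ (Fin n),
    AffineIndependent ℝ v ∧ (∃ e : ℝ, ∀ j k, j ≠ k → dist (v j) (v k) = e) ∧
    (∀ j, ‖v j‖ = 1) ∧ t = (volume (simplexSet v)).toReal}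

end

/-!
The Lagrange polynomials of `S` are its barycentric coordinates, so `S = {x | ∀ k, 0 ≤ λ_k x}`.
Every `λ_k` equals `1/(n+1)` at the centroid, hence `σS = {x | ∀ k, (1 - σ)/(n+1) ≤ λ_k x}` for
`σ > 0`, and `Ω ⊆ σS` exactly when `σ ≥ (n+1) max_k max_Ω (-λ_k) + 1`. Since `Ω ⊄ S`, this
bound is at least `1`, so it is the absorption index.
-/

theorem AffineMap.apply_add_smul_sub {E : Type*} [AddCommGroup E] [Module ℝ E]
    (f : E →ᵃ[ℝ] ℝ) (c x : E) (t : ℝ) : f (c + t • (x - c)) = t * f x + (1 - t) * f c := by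
  rw [add_comm, ← lineMap_apply_module', apply_lineMap, lineMap_apply_ring]
  ring

theorem IsCompact.bddAbove_setOf_exists_apply {X ι : Type*} [TopologicalSpace X] [Finite ι]
    {Ω : Set X} (hΩ : IsCompact Ω) {f : ι → X → ℝ} (hf : ∀ i, Continuous (f i)) :
    BddAbove {y : ℝ | ∃ i, ∃ x ∈ Ω, y = f i x} := by
  refine (isCompact_iUnion fun i => hΩ.image (hf i)).bddAbove.mono ?_
  rintro _ ⟨i, x, hx, rfl⟩
  exact mem_iUnion.mpr ⟨i, x, hx, rfl⟩

namespace AffineBasis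

variable {ι E : Type*} [AddCommGroup E] [Module ℝ E] (b : AffineBasis ι ℝ E)

theorem eq_coord_of_apply_eq_ite [DecidableEq ι] {lam : ι → E →ᵃ[ℝ] ℝ}
    (h : ∀ j k, lam j (b k) = if j = k then 1 else 0) : lam = b.coord :=
  funext fun j => AffineMap.ext_on b.tot (by rintro _ ⟨k, rfl⟩; simp [h, b.coord_apply])

theorem mem_image_homothety_convexHull_iff {σ : ℝ} (hσ : 0 < σ) (c y : E) :
    y ∈ (fun x => c + σ • (x - c)) '' convexHull ℝ (range b) ↔
      ∀ i, (1 - σ) * b.coord i c ≤ b.coord i y := by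
  simp only [b.convexHull_eq_nonneg_coord, mem_image, mem_ofPred_eq]
  constructor
  · rintro ⟨x, hx, rfl⟩ i
    rw [AffineMap.apply_add_smul_sub]
    nlinarith [hx i]
  · intro hy
    refine ⟨c + σ⁻¹ • (y - c), fun i => ?_, ?_⟩
    · rw [AffineMap.apply_add_smul_sub, ← mul_le_mul_iff_of_pos_left hσ]
      have := hy i
      field_simp
      linarith
    · simp [smul_inv_smul₀ hσ.ne']

variable [Fintype ι]

theorem coord_centroid (i : ι) :
    b.coord i (univ.centroid ℝ b) = (Fintype.card ι : ℝ)⁻¹ := by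
  have : Nonempty ι := b.nonempty
  rw [centroid_def, b.coord_apply_combination_of_mem (mem_univ i)
    (sum_centroidWeights_eq_one_of_nonempty ℝ _ univ_nonempty), centroidWeights_apply, card_univ]

theorem subset_image_homothety_centroid_iff {Ω : Set E} (hΩ : Ω.Nonempty)
    (hbdd : BddAbove {y : ℝ | ∃ i, ∃ x ∈ Ω, y = -b.coord i x}) {σ : ℝ} (hσ : 0 < σ) :
    Ω ⊆ (fun x => univ.centroid ℝ b + σ • (x - univ.centroid ℝ b)) '' convexHull ℝ (range b) ↔
      Fintype.card ι * sSup {y : ℝ | ∃ i, ∃ x ∈ Ω, y = -b.coord i x} + 1 ≤ σ := by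
  have : Nonempty ι := b.nonempty
  have hcard : (0 : ℝ) < Fintype.card ι := by exact_mod_cast Fintype.card_pos
  obtain ⟨x₀, hx₀⟩ := hΩ
  have hne : {y : ℝ | ∃ i, ∃ x ∈ Ω, y = -b.coord i x}.Nonempty :=
    ⟨_, Classical.arbitrary ι, x₀, hx₀, rfl⟩
  rw [← le_sub_iff_add_le, mul_comm, ← le_div_iff₀ hcard, csSup_le_iff hbdd hne]
  simp only [Set.subset_def, b.mem_image_homothety_convexHull_iff hσ, coord_centroid,
    mem_ofPred_eq, forall_exists_index, and_imp]
  constructor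
  · rintro h _ i x hx rfl
    have := h x hx i
    rw [le_div_iff₀ hcard]
    field_simp at this
    linarith
  · intro h x hx i
    have := h _ i x hx rfl
    rw [le_div_iff₀ hcard] at this
    field_simp
    linarith

end AffineBasis

theorem xi_eq_lagrange_formula_general (n : ℕ)
    (v : Fin (n + 1) → EuclideanSpace ℝ (Fin n)) (hv : AffineIndependent ℝ v)
    (lam : Fin (n + 1) → (EuclideanSpace ℝ (Fin n) →ᵃ[ℝ] ℝ))
    (hlam : IsLagrangeBasis v lam)
    (Ω : Set (EuclideanSpace ℝ (Fin n)))
    (hΩcomp : IsCompact Ω)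
    (hnot : ¬ Ω ⊆ simplexSet v) :
    xiInd Ω v =
      ((n : ℝ) + 1) * sSup {y : ℝ | ∃ k : Fin (n + 1), ∃ x ∈ Ω, y = -(lam k x)} + 1 := by
  let b : AffineBasis (Fin (n + 1)) ℝ (EuclideanSpace ℝ (Fin n)) :=
    ⟨v, hv, hv.affineSpan_eq_top_iff_card_eq_finrank_add_one.mpr (by simp)⟩
  obtain rfl : lam = b.coord := b.eq_coord_of_apply_eq_ite hlam
  set A := {y : ℝ | ∃ k : Fin (n + 1), ∃ x ∈ Ω, y = -(b.coord k x)}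
  have hA : BddAbove A := hΩcomp.bddAbove_setOf_exists_apply fun k =>
    (b.coord k).continuous_of_finiteDimensional.neg
  obtain ⟨x, hxΩ, hxS⟩ := not_subset.mp hnot
  obtain ⟨k, hk⟩ : ∃ k, b.coord k x < 0 := by
    have : x ∉ convexHull ℝ (range b) := hxS
    simpa [b.convexHull_eq_nonneg_coord] using this
  have hM : 0 ≤ sSup A := (neg_pos.mpr hk).le.trans (le_csSup hA ⟨k, x, hxΩ, rfl⟩)
  have hadm : {σ | 1 ≤ σ ∧ Ω ⊆ simplexHomothet v σ} = Ici ((n + 1) * sSup A + 1) := by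
    ext σ
    have key := fun hσ : 0 < σ => b.subset_image_homothety_centroid_iff ⟨x, hxΩ⟩ hA hσ
    simp only [Fintype.card_fin, Nat.cast_add, Nat.cast_one] at key
    constructor
    · rintro ⟨hσ, hΩσ⟩
      exact (key (by linarith)).mp hΩσ
    · intro hσ
      have hσ1 : 1 ≤ σ := by nlinarith [mem_Ici.mp hσ]
      exact ⟨hσ1, (key (by linarith)).mpr hσ⟩
  rw [xiInd, hadm, csInf_Ici]

/-- For a nondegenerate simplex `S` with basic Lagrange polynomials `λ_k`
and a convex body `Ω ⊄ S`:  `ξ(Ω;S) = (n+1)·max_k max_{x∈Ω}(−λ_k(x)) + 1`. -/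
theorem xi_eq_lagrange_formula (n : ℕ) (hn : 0 < n)
    (v : Fin (n + 1) → EuclideanSpace ℝ (Fin n)) (hv : AffineIndependent ℝ v)
    (lam : Fin (n + 1) → (EuclideanSpace ℝ (Fin n) →ᵃ[ℝ] ℝ))
    (hlam : IsLagrangeBasis v lam)
    (Ω : Set (EuclideanSpace ℝ (Fin n)))
    (hΩcomp : IsCompact Ω) (hΩconv : Convex ℝ Ω) (hΩint : (interior Ω).Nonempty)
    (hnot : ¬ Ω ⊆ simplexSet v) :
    xiInd Ω v =
      ((n : ℝ) + 1) * sSup {y : ℝ | ∃ k : Fin (n + 1), ∃ x ∈ Ω, y = -(lam k x)} + 1 :=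
  xi_eq_lagrange_formula_general n v hv lam hlam Ω hΩcomp hnot
end

section
/- Let Ω be a convex body in ℝ^n, let S be a nondegenerate n-dimensional simplex with all vertices in Ω, and let P : C(Ω) → C(Ω) be the interpolation projector with nodes at the vertices of S. Then ((n+1)/(2n))·(‖P‖_Ω − 1) + 1 ≤ ξ(Ω;S) ≤ ((n+1)/2)·(‖P‖_Ω − 1) + 1. -/
open Set MeasureTheory Finset Metric

/-! Let `λ_j` be the barycentric coordinates of `S` and `m ≥ 0` the maximum of the negative parts
`λ_j(x)⁻` over `x ∈ Ω` and all `j`. As `λ_j = 1/(n+1)` at the centroid,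
`σS = {x | ∀ j, λ_j(x) ≥ (1 - σ)/(n+1)}`, whence `ξ(Ω;S) = 1 + (n+1) m`. As `∑ λ_j = 1`,
`∑ |λ_j| = 1 + 2 ∑ λ_j⁻`, and some `λ_j(x)` is positive, so at most `n` of the negative parts
are nonzero; hence `1 + 2m ≤ ‖P‖_Ω ≤ 1 + 2nm`, and both bounds follow. -/

open AffineMap

theorem IsCompact.exists_forall_le_of_finite {X ι α : Type*} [TopologicalSpace X] [Finite ι]
    [Nonempty ι] [LinearOrder α] [TopologicalSpace α] [OrderClosedTopology α] {K : Set X}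
    (hK : IsCompact K) (hne : K.Nonempty) {f : ι → X → α} (hf : ∀ j, ContinuousOn (f j) K) :
    ∃ x₀ ∈ K, ∃ j₀, ∀ x ∈ K, ∀ j, f j x ≤ f j₀ x₀ := by
  choose y hyK hy using fun j => hK.exists_isMaxOn hne (hf j)
  obtain ⟨j₀, hj₀⟩ := Finite.exists_max fun j => f j (y j)
  exact ⟨y j₀, hyK j₀, j₀, fun x hx j => (hy j hx).trans (hj₀ j)⟩

section NegPart

variable {ι : Type*} [Fintype ι] {a : ι → ℝ}

theorem sum_abs_eq_one_add_two_mul_sum_negPart (ha : ∑ i, a i = 1) :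
    ∑ i, |a i| = 1 + 2 * ∑ i, (a i)⁻ := by
  have h (t : ℝ) : |t| = t + 2 * t⁻ := by
    linarith [abs_sub_eq_two_nsmul_negPart t, two_nsmul t⁻]
  simp only [h, Finset.sum_add_distrib, ha, Finset.mul_sum]

theorem one_add_two_mul_negPart_le_sum_abs (ha : ∑ i, a i = 1) (j : ι) :
    1 + 2 * (a j)⁻ ≤ ∑ i, |a i| := by
  rw [sum_abs_eq_one_add_two_mul_sum_negPart ha]
  gcongr
  exact Finset.single_le_sum (fun i _ => negPart_nonneg (a i)) (Finset.mem_univ j)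

theorem sum_negPart_le_of_sum_eq_one (ha : ∑ i, a i = 1) {m : ℝ} (hm : ∀ i, (a i)⁻ ≤ m) :
    ∑ i, (a i)⁻ ≤ (Fintype.card ι - 1) * m := by
  classical
  obtain ⟨j, -, hj⟩ := Finset.exists_lt_of_sum_lt (by simp [ha] : ∑ _i : ι, (0 : ℝ) < ∑ i, a i)
  rw [← Finset.add_sum_erase _ _ (Finset.mem_univ j), negPart_eq_zero.2 hj.le, zero_add]
  calc ∑ i ∈ Finset.univ.erase j, (a i)⁻ ≤ (Finset.univ.erase j).card • m :=
        Finset.sum_le_card_nsmul _ _ m fun i _ => hm i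
    _ = (Fintype.card ι - 1) * m := by
        rw [Finset.card_erase_of_mem (Finset.mem_univ j), nsmul_eq_mul, Finset.card_univ,
          Nat.cast_pred (Fintype.card_pos_iff.2 ⟨j⟩)]

end NegPart

namespace AffineBasis

variable {ι k E : Type*} [AddCommGroup E]

theorem coord_eq_of_apply_eq_ite [DecidableEq ι] [Ring k] [Module k E] (b : AffineBasis ι k E)
    {f : E →ᵃ[k] k} {j : ι} (hf : ∀ i, f (b i) = if j = i then 1 else 0) : b.coord j = f :=
  AffineMap.ext_on b.tot <| by
    rintro _ ⟨i, rfl⟩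
    rw [b.coord_apply, hf]

theorem coord_homothety [CommRing k] [Module k E] (b : AffineBasis ι k E) (c : E) (σ : k)
    (x : E) (j : ι) : b.coord j (homothety c σ x) = (1 - σ) * b.coord j c + σ * b.coord j x := by
  rw [homothety_eq_lineMap, apply_lineMap, lineMap_apply_ring]

theorem mem_image_homothety_convexHull_iff_s4 [Field k] [LinearOrder k] [IsStrictOrderedRing k]
    [Module k E] (b : AffineBasis ι k E) {c : E} {σ : k} (hσ : 0 < σ) {x : E} :
    x ∈ homothety c σ '' convexHull k (Set.range b) ↔
      ∀ j, (1 - σ) * b.coord j c ≤ b.coord j x := by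
  simp only [b.convexHull_eq_nonneg_coord, Set.mem_image, Set.mem_ofPred_eq]
  constructor
  · rintro ⟨y, hy, rfl⟩ j
    rw [coord_homothety]
    nlinarith [hy j]
  · intro hx
    refine ⟨homothety c σ⁻¹ x, fun j => ?_, ?_⟩
    · have h : 0 ≤ σ⁻¹ * ((σ - 1) * b.coord j c + b.coord j x) :=
        mul_nonneg (inv_nonneg.2 hσ.le) (by linarith [hx j])
      rw [coord_homothety]
      convert h using 1
      field_simp
    · rw [← homothety_mul_apply, mul_inv_cancel₀ hσ.ne', homothety_one, id_apply]

end AffineBasis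

section LagrangeBasis

variable {n : ℕ} {v : Fin (n + 1) → EuclideanSpace ℝ (Fin n)}
  {lam : Fin (n + 1) → (EuclideanSpace ℝ (Fin n) →ᵃ[ℝ] ℝ)}

def simplexAffineBasis (hv : AffineIndependent ℝ v) :
    AffineBasis (Fin (n + 1)) ℝ (EuclideanSpace ℝ (Fin n)) :=
  ⟨v, hv, hv.affineSpan_eq_top_iff_card_eq_finrank_add_one.2 (by simp)⟩

@[simp]
theorem coe_simplexAffineBasis (hv : AffineIndependent ℝ v) : ⇑(simplexAffineBasis hv) = v :=
  rfl

theorem simplexHomothet_eq_image_homothety (v : Fin (n + 1) → EuclideanSpace ℝ (Fin n))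
    (σ : ℝ) : simplexHomothet v σ = homothety (simplexCentroid v) σ '' simplexSet v := by
  rw [simplexHomothet, homothet]
  congr 1
  ext x
  simp [homothety_apply, add_comm]

theorem IsLagrangeBasis.eq_coord (hv : AffineIndependent ℝ v) (hlam : IsLagrangeBasis v lam)
    (j : Fin (n + 1)) : lam j = (simplexAffineBasis hv).coord j :=
  ((simplexAffineBasis hv).coord_eq_of_apply_eq_ite (hlam j)).symm

theorem IsLagrangeBasis.sum_eq_one (hv : AffineIndependent ℝ v) (hlam : IsLagrangeBasis v lam)
    (x : EuclideanSpace ℝ (Fin n)) : ∑ j, lam j x = 1 := by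
  simp only [hlam.eq_coord hv, AffineBasis.sum_coord_apply_eq_one]

theorem IsLagrangeBasis.mem_simplexHomothet_iff (hv : AffineIndependent ℝ v)
    (hlam : IsLagrangeBasis v lam) {σ : ℝ} (hσ : 0 < σ) {x : EuclideanSpace ℝ (Fin n)} :
    x ∈ simplexHomothet v σ ↔ ∀ j, (1 - σ) / (n + 1) ≤ lam j x := by
  have hc (j) : lam j (simplexCentroid v) = ((n : ℝ) + 1)⁻¹ := by
    have h := (simplexAffineBasis hv).coord_apply_centroid (s := Finset.univ) (Finset.mem_univ j)
    simp only [coe_simplexAffineBasis] at h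
    simpa [hlam.eq_coord hv, simplexCentroid] using h
  rw [simplexHomothet_eq_image_homothety, simplexSet, ← coe_simplexAffineBasis hv,
    AffineBasis.mem_image_homothety_convexHull_iff_s4 _ hσ]
  simp only [coe_simplexAffineBasis, ← hlam.eq_coord hv, hc, div_eq_mul_inv]

theorem IsLagrangeBasis.subset_simplexHomothet_iff (hv : AffineIndependent ℝ v)
    (hlam : IsLagrangeBasis v lam) {σ : ℝ} (hσ : 1 ≤ σ) {Ω : Set (EuclideanSpace ℝ (Fin n))} :
    Ω ⊆ simplexHomothet v σ ↔ ∀ x ∈ Ω, ∀ j, (lam j x)⁻ ≤ (σ - 1) / (n + 1) := by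
  have hc : 0 ≤ (σ - 1) / ((n : ℝ) + 1) := div_nonneg (by linarith) (by positivity)
  simp only [Set.subset_def, hlam.mem_simplexHomothet_iff hv (by linarith : (0 : ℝ) < σ),
    negPart_def, sup_le_iff, hc, and_true, neg_le, ← neg_div, neg_sub]

theorem IsLagrangeBasis.xiInd_eq (hv : AffineIndependent ℝ v) (hlam : IsLagrangeBasis v lam)
    {Ω : Set (EuclideanSpace ℝ (Fin n))} {x₀ : EuclideanSpace ℝ (Fin n)} (hx₀ : x₀ ∈ Ω)
    {j₀ : Fin (n + 1)} (hmax : ∀ x ∈ Ω, ∀ j, (lam j x)⁻ ≤ (lam j₀ x₀)⁻) :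
    xiInd Ω v = 1 + (n + 1) * (lam j₀ x₀)⁻ := by
  have hn : (0 : ℝ) < n + 1 := by positivity
  have hm := negPart_nonneg (lam j₀ x₀)
  suffices {σ : ℝ | 1 ≤ σ ∧ Ω ⊆ simplexHomothet v σ} = Set.Ici (1 + (n + 1) * (lam j₀ x₀)⁻) by
    rw [xiInd, this, csInf_Ici]
  ext σ
  simp only [Set.mem_ofPred_eq, Set.mem_Ici]
  constructor
  · rintro ⟨hσ, hΩ⟩
    have h := (hlam.subset_simplexHomothet_iff hv hσ).1 hΩ x₀ hx₀ j₀
    rw [le_div_iff₀ hn] at h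
    linarith
  · intro hσ
    have hσ₁ : 1 ≤ σ := by nlinarith
    refine ⟨hσ₁, (hlam.subset_simplexHomothet_iff hv hσ₁).2 fun x hx j => (hmax x hx j).trans ?_⟩
    rw [le_div_iff₀ hn]
    linarith

theorem one_add_two_mul_negPart_le_projNorm {Ω : Set (EuclideanSpace ℝ (Fin n))}
    (hΩ : IsCompact Ω) (hsum : ∀ x, ∑ j, lam j x = 1) {x : EuclideanSpace ℝ (Fin n)}
    (hx : x ∈ Ω) (j : Fin (n + 1)) : 1 + 2 * (lam j x)⁻ ≤ projNorm Ω lam :=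
  (one_add_two_mul_negPart_le_sum_abs (hsum x) j).trans <|
    le_csSup (hΩ.bddAbove_image (continuous_finsetSum _ fun j _ =>
      (lam j).continuous_of_finiteDimensional.abs).continuousOn) (Set.mem_image_of_mem _ hx)

theorem projNorm_le {Ω : Set (EuclideanSpace ℝ (Fin n))} (hΩ : Ω.Nonempty)
    (hsum : ∀ x, ∑ j, lam j x = 1) {m : ℝ} (hm : ∀ x ∈ Ω, ∀ j, (lam j x)⁻ ≤ m) :
    projNorm Ω lam ≤ 1 + 2 * (n * m) :=
  csSup_le (hΩ.image _) <| Set.forall_mem_image.2 fun x hx => by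
    have h := sum_negPart_le_of_sum_eq_one (hsum x) (hm x hx)
    rw [Fintype.card_fin, Nat.cast_succ, add_sub_cancel_right] at h
    rw [sum_abs_eq_one_add_two_mul_sum_negPart (hsum x)]
    linarith

end LagrangeBasis

theorem xi_bounds_via_projNorm_general (n : ℕ)
    (Ω : Set (EuclideanSpace ℝ (Fin n)))
    (hΩcomp : IsCompact Ω)
    (v : Fin (n + 1) → EuclideanSpace ℝ (Fin n)) (hv : AffineIndependent ℝ v)
    (hmem : ∀ j, v j ∈ Ω)
    (lam : Fin (n + 1) → (EuclideanSpace ℝ (Fin n) →ᵃ[ℝ] ℝ))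
    (hlam : IsLagrangeBasis v lam) :
    ((n : ℝ) + 1) / (2 * n) * (projNorm Ω lam - 1) + 1 ≤ xiInd Ω v ∧
    xiInd Ω v ≤ ((n : ℝ) + 1) / 2 * (projNorm Ω lam - 1) + 1 := by
  have hΩ : Ω.Nonempty := ⟨v 0, hmem 0⟩
  obtain ⟨x₀, hx₀, j₀, hmax⟩ := hΩcomp.exists_forall_le_of_finite hΩ fun j =>
    (continuous_negPart.comp (lam j).continuous_of_finiteDimensional).continuousOn
  set m := (lam j₀ x₀)⁻
  have hsum := hlam.sum_eq_one hv
  have hlow : 1 + 2 * m ≤ projNorm Ω lam := one_add_two_mul_negPart_le_projNorm hΩcomp hsum hx₀ j₀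
  have hup : projNorm Ω lam ≤ 1 + 2 * (n * m) := projNorm_le hΩ hsum hmax
  rw [hlam.xiInd_eq hv hx₀ hmax]
  constructor
  · calc ((n : ℝ) + 1) / (2 * n) * (projNorm Ω lam - 1) + 1
        ≤ (n + 1) / (2 * n) * (2 * (n * m)) + 1 := by gcongr; linarith
      _ = (n + 1) * m * ((2 * n) / (2 * n)) + 1 := by ring
      _ ≤ 1 + (n + 1) * m := by
        have := mul_le_of_le_one_right (by positivity : 0 ≤ ((n : ℝ) + 1) * m)
          (div_self_le_one ((2 : ℝ) * n))
        linarith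
  · calc 1 + (n + 1) * m = (n + 1) / 2 * (2 * m) + 1 := by ring
      _ ≤ ((n : ℝ) + 1) / 2 * (projNorm Ω lam - 1) + 1 := by gcongr; linarith

/-- For a convex body `Ω`, a nondegenerate simplex with vertices in `Ω`
and the corresponding interpolation projector `P`:
`((n+1)/(2n))(‖P‖_Ω − 1) + 1 ≤ ξ(Ω;S) ≤ ((n+1)/2)(‖P‖_Ω − 1) + 1`. -/
theorem xi_bounds_via_projNorm (n : ℕ) (hn : 0 < n)
    (Ω : Set (EuclideanSpace ℝ (Fin n)))
    (hΩcomp : IsCompact Ω) (hΩconv : Convex ℝ Ω) (hΩint : (interior Ω).Nonempty)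
    (v : Fin (n + 1) → EuclideanSpace ℝ (Fin n)) (hv : AffineIndependent ℝ v)
    (hmem : ∀ j, v j ∈ Ω)
    (lam : Fin (n + 1) → (EuclideanSpace ℝ (Fin n) →ᵃ[ℝ] ℝ))
    (hlam : IsLagrangeBasis v lam) :
    ((n : ℝ) + 1) / (2 * n) * (projNorm Ω lam - 1) + 1 ≤ xiInd Ω v ∧
    xiInd Ω v ≤ ((n : ℝ) + 1) / 2 * (projNorm Ω lam - 1) + 1 :=
  xi_bounds_via_projNorm_general n Ω hΩcomp v hv hmem lam hlam
end

section
/- For every n ∈ ℕ and every γ ≥ 1, the n-dimensional Lebesgue measure of the set E_{n,γ} := { x ∈ ℝ^n : Σ_{j=1}^{n} |x_j| + |1 − Σ_{j=1}^{n} x_j| ≤ γ } equals χ_n(γ)/n!. -/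
open Set MeasureTheory Finset Metric

/-!
On the orthant where exactly the coordinates in `J` are negative, write `p = ∑_{i∈J} |x_i|` and
`q = ∑_{i∉J} x_i`; the defining inequality becomes `p + q + |1 + p - q| ≤ γ`, that is
`p ≤ a := (γ-1)/2` and `q ≤ b := (γ+1)/2`. So, reflected into the positive orthant, the piece is a
product of two corner simplices, of volume `a^k/k! · b^(n-k)/(n-k)!` with `k = |J|`. Summing over
`J` gives `(1/n!) ∑_k C(n,k)² a^k b^(n-k)`, and Leibniz's rule applied to `(t+1)ⁿ (t-1)ⁿ` in the
Rodrigues formula shows that `χ_n(γ) = ∑_k C(n,k)² a^k b^(n-k)`.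
-/

open scoped Nat

lemma iteratedDeriv_add_const_pow {𝕜 : Type*} [NontriviallyNormedField 𝕜] (m k : ℕ) (c t : 𝕜) :
    iteratedDeriv k (fun s => (s + c) ^ m) t = m.descFactorial k * (t + c) ^ (m - k) := by
  rw [iteratedDeriv_comp_add_const (f := (· ^ m))]
  exact iteratedDeriv_pow m k

theorem legendreChi_eq_sum (n : ℕ) (t : ℝ) :
    legendreChi n t =
      ∑ k ∈ range (n + 1), (n.choose k : ℝ) ^ 2 * ((t - 1) / 2) ^ k * ((t + 1) / 2) ^ (n - k) := by
  have hfactor : (fun s : ℝ => (s ^ 2 - 1) ^ n) = fun s => (s + 1) ^ n * (s + -1) ^ n := by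
    funext s; rw [← mul_pow]; ring
  have hleibniz : iteratedDeriv n (fun s : ℝ => (s ^ 2 - 1) ^ n) t =
      (n ! : ℝ) * ∑ k ∈ range (n + 1), (n.choose k : ℝ) ^ 2 * (t + 1) ^ (n - k) * (t - 1) ^ k := by
    rw [hfactor, iteratedDeriv_fun_mul (by fun_prop) (by fun_prop), mul_sum]
    refine sum_congr rfl fun k hk => ?_
    have hkn : k ≤ n := Nat.lt_succ_iff.mp (mem_range.mp hk)
    rw [iteratedDeriv_add_const_pow, iteratedDeriv_add_const_pow, Nat.sub_sub_self hkn,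
      Nat.descFactorial_eq_factorial_mul_choose, Nat.descFactorial_eq_factorial_mul_choose,
      Nat.choose_symm hkn, ← sub_eq_add_neg]
    have hfac : (n.choose k * k ! * (n - k)! : ℝ) = n ! := by
      exact_mod_cast Nat.choose_mul_factorial_mul_factorial hkn
    push_cast
    linear_combination (n.choose k : ℝ) ^ 2 * (t + 1) ^ (n - k) * (t - 1) ^ k * hfac
  unfold legendreChi
  rw [hleibniz, mul_sum, mul_sum]
  refine sum_congr rfl fun k hk => ?_
  have hkn : k ≤ n := Nat.lt_succ_iff.mp (mem_range.mp hk)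
  have h2 : (2 : ℝ) ^ n = 2 ^ k * 2 ^ (n - k) := by rw [← pow_add, Nat.add_sub_cancel' hkn]
  rw [div_pow, div_pow, h2]
  field_simp

lemma legendreChi_div_factorial_eq_sum_finset (ι : Type*) [Fintype ι] (t : ℝ) :
    legendreChi (Fintype.card ι) t / (Fintype.card ι)! =
      ∑ J : Finset ι, ((t - 1) / 2) ^ J.card / J.card ! *
        (((t + 1) / 2) ^ (Fintype.card ι - J.card) / (Fintype.card ι - J.card)!) := by
  set n := Fintype.card ι
  rw [← Finset.powerset_univ, Finset.sum_powerset_apply_card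
      (f := fun k => ((t - 1) / 2) ^ k / k ! * (((t + 1) / 2) ^ (n - k) / (n - k)!)),
    Finset.card_univ, legendreChi_eq_sum, Finset.sum_div]
  refine Finset.sum_congr rfl fun k hk => ?_
  have hfac : (n.choose k * k ! * (n - k)! : ℝ) = n ! := by
    exact_mod_cast Nat.choose_mul_factorial_mul_factorial (Nat.lt_succ_iff.mp (mem_range.mp hk))
  rw [nsmul_eq_mul]
  field_simp
  linear_combination (n.choose k : ℝ) * ((t - 1) / 2) ^ k * ((t + 1) / 2) ^ (n - k) * hfac

section Orthants

variable {ι : Type*} [DecidableEq ι]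

def signFlip (J : Finset ι) (x : ι → ℝ) : ι → ℝ := fun i => if i ∈ J then -x i else x i

lemma signFlip_signFlip (J : Finset ι) (x : ι → ℝ) : signFlip J (signFlip J x) = x := by
  funext i; by_cases hi : i ∈ J <;> simp [signFlip, hi]

lemma abs_signFlip (J : Finset ι) (x : ι → ℝ) (i : ι) : |signFlip J x i| = |x i| := by
  by_cases hi : i ∈ J <;> simp [signFlip, hi]

variable [Fintype ι]

noncomputable def negSupport (x : ι → ℝ) : Finset ι := {i | x i < 0}

lemma measurePreserving_signFlip (J : Finset ι) : MeasurePreserving (signFlip J) := by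
  refine measurePreserving_pi (fun _ => volume) (fun _ => volume)
    (f := fun i t => if i ∈ J then -t else t) fun i => ?_
  by_cases hi : i ∈ J
  · simpa only [hi, if_true] using Measure.measurePreserving_neg volume
  · simp only [hi, if_false]
    exact MeasurePreserving.id volume

lemma measurableSet_negSupport_preimage_singleton (J : Finset ι) :
    MeasurableSet (negSupport ⁻¹' {J} : Set (ι → ℝ)) := by
  have hfiber : (negSupport ⁻¹' {J} : Set (ι → ℝ)) = ⋂ i, {x | x i < 0 ↔ i ∈ J} := by
    ext x; simp [negSupport, Finset.ext_iff]
  rw [hfiber]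
  refine MeasurableSet.iInter fun i => ?_
  by_cases hi : i ∈ J
  · simp only [hi, iff_true]
    exact measurableSet_lt (measurable_pi_apply i) measurable_const
  · simp only [hi, iff_false, not_lt]
    exact measurableSet_le measurable_const (measurable_pi_apply i)

lemma negSupport_preimage_singleton_eq (J : Finset ι) :
    (negSupport ⁻¹' {J} : Set (ι → ℝ)) =
      signFlip J ⁻¹' ((Set.pi J fun _ => Ioi (0 : ℝ)) ∩ Set.pi (↑J)ᶜ fun _ => Ici 0) := by
  ext x
  simp only [Set.mem_preimage, mem_singleton_iff, negSupport, Finset.ext_iff, Finset.mem_filter,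
    Finset.mem_univ, true_and, mem_inter_iff, Set.mem_pi, Finset.mem_coe, mem_compl_iff,
    Set.mem_Ioi, Set.mem_Ici, signFlip]
  refine ⟨fun h => ⟨fun i hi => ?_, fun i hi => ?_⟩, fun ⟨hJ, hJc⟩ i => ?_⟩
  · simpa [hi] using (h i).mpr hi
  · simpa [hi] using mt (h i).mp hi
  · by_cases hi : i ∈ J
    · simpa [hi] using hJ i hi
    · simpa [hi] using hJc i hi

/-- The orthants `negSupport ⁻¹' {J}` partition the space, and `signFlip J` maps each of them onto
the positive orthant up to a null set. -/
theorem volume_eq_sum_signFlip_inter_Ici {S : Set (ι → ℝ)} (hS : MeasurableSet S) :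
    volume S = ∑ J : Finset ι, volume (signFlip J ⁻¹' S ∩ Ici 0) := by
  have hpartition := sum_measure_preimage_singleton (μ := volume.restrict S) Finset.univ
    fun J _ => measurableSet_negSupport_preimage_singleton J
  rw [Finset.coe_univ, preimage_univ, Measure.restrict_apply_univ] at hpartition
  rw [← hpartition]
  refine Finset.sum_congr rfl fun J _ => ?_
  rw [Measure.restrict_apply (measurableSet_negSupport_preimage_singleton J),
    negSupport_preimage_singleton_eq]
  set A : Set (ι → ℝ) := (Set.pi J fun _ => Ioi (0 : ℝ)) ∩ Set.pi (↑J)ᶜ fun _ => Ici 0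
  have hA : MeasurableSet A :=
    (MeasurableSet.pi J.countable_toSet fun _ _ => measurableSet_Ioi).inter
      (MeasurableSet.pi (Set.toFinite _).countable fun _ _ => measurableSet_Ici)
  have hA_ae : A =ᵐ[volume] Ici 0 := by
    rw [← Set.pi_univ_Ici, ← Set.pi_inter_compl (J : Set ι)]
    exact (Measure.pi_Ioi_ae_eq_pi_Ici (μ := fun _ => volume)).inter Filter.EventuallyEq.rfl
  have hinvol : signFlip J ⁻¹' A ∩ S = signFlip J ⁻¹' (A ∩ signFlip J ⁻¹' S) := by
    ext x
    simp only [Set.mem_inter_iff, Set.mem_preimage, signFlip_signFlip]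
  rw [hinvol, (measurePreserving_signFlip J).measure_preimage
    (hA.inter ((measurePreserving_signFlip J).measurable hS)).nullMeasurableSet, Set.inter_comm]
  exact measure_congr (Filter.EventuallyEq.rfl.inter hA_ae)

end Orthants

/-- The `ℓ¹` ball, whose volume is `volume_sum_rpow_le` with `p = 1`, consists of `2 ^ card ι`
reflected copies of the corner simplex. -/
theorem volume_Ici_inter_sum_le (ι : Type*) [Fintype ι] {a : ℝ} (ha : 0 ≤ a) :
    volume (Set.Ici 0 ∩ {x : ι → ℝ | ∑ i, x i ≤ a}) =
      ENNReal.ofReal (a ^ Fintype.card ι / (Fintype.card ι)!) := by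
  classical
  rcases isEmpty_or_nonempty ι with hι | hι
  · have huniv : Set.Ici 0 ∩ {x : ι → ℝ | ∑ i, x i ≤ a} = Set.univ :=
      Set.eq_univ_of_forall fun x =>
        ⟨Set.mem_Ici.mpr (le_of_eq (Subsingleton.elim _ _)), by simp [ha]⟩
    rw [huniv, volume_pi, Measure.pi_univ, Finset.univ_eq_empty, Finset.prod_empty]
    simp
  have hball := volume_sum_rpow_le ι (p := 1) le_rfl a
  simp only [Real.rpow_one, div_one, one_add_one_eq_two, Real.Gamma_two, mul_one,
    Real.Gamma_nat_eq_factorial] at hball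
  have hsplit := volume_eq_sum_signFlip_inter_Ici (ι := ι) (S := {x | ∑ i, |x i| ≤ a})
    (measurableSet_le (by fun_prop) measurable_const)
  have hpiece (J : Finset ι) : signFlip J ⁻¹' {x | ∑ i, |x i| ≤ a} ∩ Set.Ici 0 =
      Set.Ici 0 ∩ {x : ι → ℝ | ∑ i, x i ≤ a} := by
    ext x
    simp only [Set.mem_inter_iff, Set.mem_preimage, Set.mem_ofPred_eq, abs_signFlip, Set.mem_Ici]
    refine ⟨fun ⟨h, hx⟩ => ⟨hx, ?_⟩, fun ⟨hx, h⟩ => ⟨?_, hx⟩⟩ <;>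
      simpa only [abs_of_nonneg (hx _)] using h
  simp only [hpiece, Finset.sum_const, Finset.card_univ, Fintype.card_finset,
    nsmul_eq_mul] at hsplit
  set n := Fintype.card ι
  have hcast : ((2 ^ n : ℕ) : ENNReal) = ENNReal.ofReal (2 ^ n) := by norm_cast
  refine (ENNReal.mul_right_inj (by positivity) (ENNReal.natCast_ne_top _)).mp
    (hsplit.symm.trans (hball.trans ?_))
  rw [hcast, ← ENNReal.ofReal_pow ha, ← ENNReal.ofReal_mul (by positivity),
    ← ENNReal.ofReal_mul (by positivity)]
  congr 1
  ring

theorem volume_Ici_inter_sum_le_sum_compl_le {ι : Type*} [Fintype ι] [DecidableEq ι]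
    (J : Finset ι) {a b : ℝ} (ha : 0 ≤ a) (hb : 0 ≤ b) :
    volume (Set.Ici 0 ∩ {x : ι → ℝ | ∑ i ∈ J, x i ≤ a ∧ ∑ i ∈ Jᶜ, x i ≤ b}) =
      ENNReal.ofReal (a ^ J.card / J.card !) *
        ENNReal.ofReal (b ^ (Fintype.card ι - J.card) / (Fintype.card ι - J.card)!) := by
  set A := Set.Ici 0 ∩ {u : {i // i ∈ J} → ℝ | ∑ i, u i ≤ a}
  set B := Set.Ici 0 ∩ {u : {i // i ∉ J} → ℝ | ∑ i, u i ≤ b}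
  have hsplit : Set.Ici 0 ∩ {x : ι → ℝ | ∑ i ∈ J, x i ≤ a ∧ ∑ i ∈ Jᶜ, x i ≤ b} =
      MeasurableEquiv.piEquivPiSubtypeProd (fun _ => ℝ) (· ∈ J) ⁻¹' A ×ˢ B := by
    ext x
    simp only [A, B, Set.mem_preimage, Set.mem_prod, Set.mem_inter_iff, Set.mem_Ici,
      Set.mem_ofPred_eq, Pi.le_def, Pi.zero_apply, MeasurableEquiv.piEquivPiSubtypeProd_apply,
      Finset.sum_subtype J (fun _ => Iff.rfl) x,
      Finset.sum_subtype Jᶜ (fun _ => Finset.mem_compl) x]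
    have hnonneg : (∀ i, 0 ≤ x i) ↔ (∀ i : J, 0 ≤ x i) ∧ ∀ i : {i // i ∉ J}, 0 ≤ x i :=
      ⟨fun h => ⟨fun i => h i, fun i => h i⟩,
        fun h i => if hi : i ∈ J then h.1 ⟨i, hi⟩ else h.2 ⟨i, hi⟩⟩
    rw [hnonneg]
    tauto
  have hA : MeasurableSet A :=
    measurableSet_Ici.inter (measurableSet_le (by fun_prop) (by fun_prop))
  have hB : MeasurableSet B :=
    measurableSet_Ici.inter (measurableSet_le (by fun_prop) (by fun_prop))
  rw [hsplit, (volume_preserving_piEquivPiSubtypeProd (fun _ : ι => ℝ) (· ∈ J)).measure_preimage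
    (hA.prod hB).nullMeasurableSet, Measure.volume_eq_prod, Measure.prod_prod]
  convert congr_arg₂ (· * ·) (volume_Ici_inter_sum_le {i // i ∈ J} ha)
    (volume_Ici_inter_sum_le {i // i ∉ J} hb) using 4
  · congr; exact Subsingleton.elim _ _
  all_goals simp [Fintype.card_subtype_compl]

lemma add_add_abs_one_sub_sub_le_iff {γ p q : ℝ} :
    p + q + |1 - (q - p)| ≤ γ ↔ p ≤ (γ - 1) / 2 ∧ q ≤ (γ + 1) / 2 := by
  constructor
  · intro h
    constructor <;> cases abs_cases (1 - (q - p)) <;> linarith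
  · rintro ⟨hp, hq⟩
    cases abs_cases (1 - (q - p)) <;> linarith

lemma preimage_signFlip_inter_Ici_eq {ι : Type*} [Fintype ι] [DecidableEq ι]
    (J : Finset ι) (γ : ℝ) :
    signFlip J ⁻¹' {x : ι → ℝ | ∑ j, |x j| + |1 - ∑ j, x j| ≤ γ} ∩ Set.Ici 0 =
      Set.Ici 0 ∩ {y | ∑ i ∈ J, y i ≤ (γ - 1) / 2 ∧ ∑ i ∈ Jᶜ, y i ≤ (γ + 1) / 2} := by
  ext y
  simp only [Set.mem_inter_iff, Set.mem_preimage, Set.mem_ofPred_eq, Set.mem_Ici,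
    and_comm (a := 0 ≤ y)]
  refine and_congr_left fun hy => ?_
  have habs : ∑ j, |signFlip J y j| = ∑ i ∈ J, y i + ∑ i ∈ Jᶜ, y i := by
    simp only [abs_signFlip, abs_of_nonneg (hy _), Finset.sum_add_sum_compl]
  have hJ : ∑ i ∈ J, signFlip J y i = -∑ i ∈ J, y i := by
    rw [← Finset.sum_neg_distrib]
    exact Finset.sum_congr rfl fun i hi => if_pos hi
  have hJc : ∑ i ∈ Jᶜ, signFlip J y i = ∑ i ∈ Jᶜ, y i :=
    Finset.sum_congr rfl fun i hi => if_neg (Finset.mem_compl.mp hi)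
  rw [habs, ← Finset.sum_add_sum_compl J (signFlip J y), hJ, hJc, neg_add_eq_sub,
    add_add_abs_one_sub_sub_le_iff]

theorem volume_sum_abs_add_abs_one_sub_sum_le (ι : Type*) [Fintype ι] {γ : ℝ} (hγ : 1 ≤ γ) :
    volume {x : ι → ℝ | ∑ j, |x j| + |1 - ∑ j, x j| ≤ γ} =
      ENNReal.ofReal (legendreChi (Fintype.card ι) γ / (Fintype.card ι)!) := by
  classical
  have ha : 0 ≤ (γ - 1) / 2 := by linarith
  have hb : 0 ≤ (γ + 1) / 2 := by linarith
  rw [volume_eq_sum_signFlip_inter_Ici (measurableSet_le (by fun_prop) (by fun_prop)),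
    legendreChi_div_factorial_eq_sum_finset, ENNReal.ofReal_sum_of_nonneg fun _ _ => by positivity]
  refine Finset.sum_congr rfl fun J _ => ?_
  rw [preimage_signFlip_inter_Ici_eq, volume_Ici_inter_sum_le_sum_compl_le J ha hb,
    ENNReal.ofReal_mul (by positivity)]

/-- For every `n` and `γ ≥ 1`, the Lebesgue measure of
`E_{n,γ} = {x ∈ ℝ^n : Σ|x_j| + |1 − Σ x_j| ≤ γ}` equals `χ_n(γ)/n!`. -/
theorem measure_E_eq_legendre (n : ℕ) (γ : ℝ) (hγ : 1 ≤ γ) :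
    volume {x : EuclideanSpace ℝ (Fin n) |
        (∑ j : Fin n, |x j|) + |1 - ∑ j : Fin n, x j| ≤ γ} =
      ENNReal.ofReal (legendreChi n γ / (n.factorial : ℝ)) := by
  have hpi := volume_sum_abs_add_abs_one_sub_sum_le (Fin n) hγ
  rw [Fintype.card_fin] at hpi
  have hmeas : MeasurableSet {x : Fin n → ℝ | ∑ j, |x j| + |1 - ∑ j, x j| ≤ γ} :=
    measurableSet_le (by fun_prop) (by fun_prop)
  rw [← hpi]
  exact (EuclideanSpace.volume_preserving_symm_measurableEquiv_toLp (Fin n)).measure_preimage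
    hmeas.nullMeasurableSet
end
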